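/- arXiv:math/9809184 — 6 statements merged into one kernel-verified Lean document; each statement's English description precedes it below -/
import Mathlib

section
/- Let $T$ be an $n$-dimensional complex vector space and let $Q_1,\dots,Q_p \in S^2 T^*$ be linearly independent quadratic forms. Suppose there exist linearly independent linear forms $l^1,\dots,l^p \in T^*$ with $l^1 Q_1 + \cdots + l^p Q_p = 0$ in $S^3 T^*$ (a linear syzygy with independent coefficients). Then every quadric $Q$ in the span of $Q_1,\dots,Q_p$ has rank at most $2(p-1)$. -/
open Module Submodule LinearMap


lemma aux_finrank_iInf_ker {T : Type*} [AddCommGroup T] [Module ℂ T] [FiniteDimensional ℂ T]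
    {ι : Type*} [Fintype ι] (f : ι → T →ₗ[ℂ] ℂ) :
    finrank ℂ T ≤ finrank ℂ ↥(⨅ i, LinearMap.ker (f i)) + Fintype.card ι := by
  have h := LinearMap.finrank_range_add_finrank_ker (LinearMap.pi f)
  rw [LinearMap.ker_pi] at h
  have h2 : finrank ℂ ↥(LinearMap.range (LinearMap.pi f)) ≤ Fintype.card ι := by
    have := Submodule.finrank_le (LinearMap.range (LinearMap.pi f))
    rwa [Module.finrank_fintype_fun_eq_card] at this
  omega




/-- If linearly independent quadratic forms `Q₁, …, Q_p` (viewed as symmetric bilinear forms)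
on an `n`-dimensional complex vector space admit a linear syzygy `l¹Q₁ + ⋯ + lᵖQ_p = 0`
with linearly independent linear forms `lⁱ` (the cubic form vanishes, equivalently its values
on the diagonal `∑ᵢ lⁱ(x) Qᵢ(x,x)` vanish for all `x`), then every quadric in the span of the
`Qᵢ` has rank at most `2(p-1)`. -/
theorem linear_syzygy_rank_bound
    {T : Type*} [AddCommGroup T] [Module ℂ T] [FiniteDimensional ℂ T]
    {n p : ℕ} (hn : Module.finrank ℂ T = n)
    (Q : Fin p → (T →ₗ[ℂ] T →ₗ[ℂ] ℂ))
    (hQsymm : ∀ i, ∀ x y : T, Q i x y = Q i y x)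
    (hQind : LinearIndependent ℂ Q)
    (l : Fin p → (T →ₗ[ℂ] ℂ)) (hlind : LinearIndependent ℂ l)
    (hsyz : ∀ x : T, ∑ i, l i x * Q i x x = 0) :
    ∀ c : Fin p → ℂ,
      Module.finrank ℂ (LinearMap.range (∑ i, c i • Q i)) ≤ 2 * (p - 1) := by
  intro c
  by_cases hc : c = 0
  · subst hc
    have hzero : (∑ i : Fin p, (0 : Fin p → ℂ) i • Q i) = 0 := by simp
    rw [hzero, LinearMap.range_zero]
    simp
  obtain ⟨j, hcj⟩ := Function.ne_iff.mp hc
  rw [Pi.zero_apply] at hcj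
  have hp : 0 < p := j.pos
  set B : T →ₗ[ℂ] T →ₗ[ℂ] ℂ := ∑ i, c i • Q i with hB
  have hBapp : ∀ y z : T, B y z = ∑ i, c i * Q i y z := by
    intro y z
    simp [hB, LinearMap.sum_apply, LinearMap.smul_apply, smul_eq_mul]
  have hBsymm : ∀ y z : T, B y z = B z y := by
    intro y z
    rw [hBapp, hBapp]
    exact Finset.sum_congr rfl fun i _ => by rw [hQsymm i y z]
  set M : Fin p → (T →ₗ[ℂ] ℂ) := fun i => l i - (c i / c j) • l j with hM
  set K : Submodule ℂ T := ⨅ i : {i : Fin p // i ≠ j}, LinearMap.ker (M i.1) with hK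
  have hcard : Fintype.card {i : Fin p // i ≠ j} = p - 1 := by
    simp [Fintype.card_subtype_compl]
  have hKdim : finrank ℂ T ≤ finrank ℂ ↥K + (p - 1) := by
    have := aux_finrank_iInf_ker (fun i : {i : Fin p // i ≠ j} => M i.1)
    rwa [hcard] at this
  have hKmem : ∀ x ∈ K, ∀ i, i ≠ j → c j * l i x = c i * l j x := by
    intro x hx i hi
    have h1 : M i x = 0 := (Submodule.mem_iInf _).mp hx ⟨i, hi⟩
    have h2 : l i x - (c i / c j) * l j x = 0 := by
      simpa [hM, LinearMap.sub_apply, LinearMap.smul_apply, smul_eq_mul] using h1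
    field_simp [hcj] at h2
    linear_combination h2
  have hdiag : ∀ x ∈ K, l j x * B x x = 0 := by
    intro x hx
    have h3 : l j x * B x x = c j * ∑ i, l i x * Q i x x := by
      rw [hBapp, Finset.mul_sum, Finset.mul_sum]
      refine Finset.sum_congr rfl fun i _ => ?_
      by_cases hi : i = j
      · subst hi; ring
      · linear_combination (-(Q i x x)) * hKmem x hx i hi
    rw [h3, hsyz x, mul_zero]
  have hmex : ∃ y ∈ K, l j y ≠ 0 := by
    by_contra hcon
    push_neg at hcon
    have hKle : K ≤ ⨅ i : Fin p, LinearMap.ker (l i) := by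
      intro x hx
      rw [Submodule.mem_iInf]
      intro i
      rw [LinearMap.mem_ker]
      by_cases hi : i = j
      · subst hi; exact hcon x hx
      · have h4 := hKmem x hx i hi
        rw [hcon x hx, mul_zero] at h4
        exact (mul_eq_zero.mp h4).resolve_left hcj
    have hsub : (⨅ i : Fin p, LinearMap.ker (l i)) ≤
        (Submodule.span ℂ (Set.range l)).dualCoannihilator := by
      intro x hx
      rw [Submodule.mem_dualCoannihilator]
      intro f hf
      induction hf using Submodule.span_induction with
      | mem g hg => obtain ⟨i, rfl⟩ := hg; exact (Submodule.mem_iInf _).mp hx i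
      | zero => simp
      | add a b _ _ ha hb => simp [ha, hb]
      | smul t a _ ha => simp [ha]
    have hd1 : finrank ℂ ↥(Submodule.span ℂ (Set.range l)) = p := by
      rw [finrank_span_eq_card hlind, Fintype.card_fin]
    have hd2 : finrank ℂ ↥(Submodule.span ℂ (Set.range l)) +
        finrank ℂ ↥(Submodule.span ℂ (Set.range l)).dualCoannihilator = finrank ℂ T :=
      Subspace.finrank_add_finrank_dualCoannihilator_eq _
    have hp_le : p ≤ finrank ℂ T := by
      have h5 := hlind.fintype_card_le_finrank
      rw [Fintype.card_fin] at h5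
      rwa [Subspace.dual_finrank_eq] at h5
    have hKle' : finrank ℂ ↥K ≤
        finrank ℂ ↥(Submodule.span ℂ (Set.range l)).dualCoannihilator :=
      Submodule.finrank_mono (hKle.trans hsub)
    omega
  obtain ⟨y, hyK, hy⟩ := hmex
  have hBdiag : ∀ x ∈ K, B x x = 0 := by
    intro x hx
    by_cases hmx : l j x = 0
    · have f1 : B x x + 2 * B x y + B y y = 0 := by
        have e1 := hdiag (x + y) (K.add_mem hx hyK)
        simp only [map_add, LinearMap.add_apply, hmx, zero_add] at e1
        rw [hBsymm y x] at e1
        have h6 : l j y * (B x x + 2 * B x y + B y y) = 0 := by linear_combination e1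
        exact (mul_eq_zero.mp h6).resolve_left hy
      have f2 : B x x - 2 * B x y + B y y = 0 := by
        have e2 := hdiag (x - y) (K.sub_mem hx hyK)
        simp only [map_sub, LinearMap.sub_apply, hmx, zero_sub] at e2
        rw [hBsymm y x] at e2
        have h6 : l j y * (B x x - 2 * B x y + B y y) = 0 := by linear_combination -e2
        exact (mul_eq_zero.mp h6).resolve_left hy
      have f3 : B x x + 4 * B x y + 4 * B y y = 0 := by
        have e3 := hdiag (x + (2:ℂ) • y) (K.add_mem hx (K.smul_mem _ hyK))
        simp only [map_add, map_smul, LinearMap.add_apply, LinearMap.smul_apply,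
          smul_eq_mul, hmx, zero_add] at e3
        rw [hBsymm y x] at e3
        have h6 : l j y * (B x x + 4 * B x y + 4 * B y y) = 0 := by linear_combination e3 / 2
        exact (mul_eq_zero.mp h6).resolve_left hy
      linear_combination f1 + f2 / 3 - f3 / 3
    · exact (mul_eq_zero.mp (hdiag x hx)).resolve_left hmx
  have hBK : ∀ x ∈ K, ∀ z ∈ K, B x z = 0 := by
    intro x hx z hz
    have h1 := hBdiag (x + z) (K.add_mem hx hz)
    simp only [map_add, LinearMap.add_apply] at h1
    rw [hBdiag x hx, hBdiag z hz, hBsymm z x] at h1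
    have h2 : (2:ℂ) * B x z = 0 := by linear_combination h1
    exact (mul_eq_zero.mp h2).resolve_left two_ne_zero
  set r := K.dualRestrict with hr
  have hrank := LinearMap.finrank_range_add_finrank_ker (r.domRestrict (LinearMap.range B))
  have hA : finrank ℂ ↥(LinearMap.range (r.domRestrict (LinearMap.range B))) ≤ p - 1 := by
    have hcomp : LinearMap.range (r.domRestrict (LinearMap.range B))
        = LinearMap.range (r ∘ₗ B) := by
      rw [LinearMap.range_domRestrict, LinearMap.range_comp]
    rw [hcomp]
    have hker : K ≤ LinearMap.ker (r ∘ₗ B) := by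
      intro x hx
      rw [LinearMap.mem_ker]
      ext z
      simp only [LinearMap.comp_apply, Submodule.dualRestrict_apply, LinearMap.zero_apply]
      exact hBK x hx z z.2
    have h5 := LinearMap.finrank_range_add_finrank_ker (r ∘ₗ B)
    have h6 : finrank ℂ ↥K ≤ finrank ℂ ↥(LinearMap.ker (r ∘ₗ B)) := Submodule.finrank_mono hker
    omega
  have hBker : finrank ℂ ↥(LinearMap.ker (r.domRestrict (LinearMap.range B))) ≤ p - 1 := by
    have hmap : Submodule.map (LinearMap.range B).subtype
        (LinearMap.ker (r.domRestrict (LinearMap.range B))) ≤ LinearMap.ker r := by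
      rintro f ⟨⟨g, hg⟩, hgker, rfl⟩
      simp only [LinearMap.mem_ker, LinearMap.domRestrict_apply] at hgker ⊢
      exact hgker
    have heq : finrank ℂ ↥(LinearMap.ker (r.domRestrict (LinearMap.range B)))
        = finrank ℂ ↥(Submodule.map (LinearMap.range B).subtype
            (LinearMap.ker (r.domRestrict (LinearMap.range B)))) :=
      (Submodule.equivMapOfInjective _ (Submodule.injective_subtype _) _).finrank_eq
    have h8 : finrank ℂ ↥(LinearMap.ker r) ≤ p - 1 := by
      have e3 : finrank ℂ ↥(LinearMap.ker r) + finrank ℂ ↥K = finrank ℂ T := by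
        rw [hr, K.dualRestrict_ker_eq_dualAnnihilator]
        have e := (Subspace.quotEquivAnnihilator K).finrank_eq
        have e2 := Submodule.finrank_quotient_add_finrank K
        omega
      omega
    have h7 : finrank ℂ ↥(Submodule.map (LinearMap.range B).subtype
        (LinearMap.ker (r.domRestrict (LinearMap.range B)))) ≤ finrank ℂ ↥(LinearMap.ker r) :=
      Submodule.finrank_mono hmap
    omega
  exact le_trans (le_of_eq hrank.symm) (by omega)
end

section
/- Let $r$ be an odd positive integer with $r \le m$. Then any linear subspace $A \subseteq S^2(\mathbb{C}^m)$ (symmetric $m\times m$ complex matrices) with the property that every nonzero element of $A$ has rank exactly $r$ satisfies $\dim A \le 1$. -/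
/-!
Take two independent elements `M₀, M₁` of `A`; every `M₀ + t M₁` is then symmetric of rank `r`.
Through a rank factorization, the `r × r` minors of a rank `r` matrix factor as
`det N[f, g] = u f * w g`, so for a symmetric one `det N[f, f] * det N[g, g] = det N[f, g] ^ 2`
and some principal `r`-minor is nonzero. Fix `f₀` with `det M₁[f₀, f₀] ≠ 0`; then
`p(t) = det (M₀ + t M₁)[f₀, f₀]` has degree exactly `r`. At any `t` choose `f₁` with
`det (M₀ + t M₁)[f₁, f₁] ≠ 0`: the polynomial identity
`p * det (M₀ + X M₁)[f₁, f₁] = det (M₀ + X M₁)[f₀, f₁] ^ 2` shows that `t` is a root of `p` of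
even multiplicity. Over `ℂ` the degree of `p` is the sum of these multiplicities, so `r` is even.
-/

open Polynomial

namespace Polynomial

variable {R : Type*} [CommRing R] [IsDomain R]

theorem even_rootMultiplicity_of_mul_eq_sq {p q s : R[X]} {t : R} (h : p * q = s ^ 2)
    (hp : p ≠ 0) (hq : q.eval t ≠ 0) : Even (p.rootMultiplicity t) := by
  have hq₀ : q ≠ 0 := fun h₀ => hq (by simp [h₀])
  have hpq : p * q ≠ 0 := mul_ne_zero hp hq₀
  have hss : s * s ≠ 0 := by rwa [← sq, ← h]
  have hmult := rootMultiplicity_mul (x := t) hpq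
  rw [h, sq, rootMultiplicity_mul hss, rootMultiplicity_eq_zero hq] at hmult
  exact ⟨s.rootMultiplicity t, by omega⟩

theorem Splits.even_natDegree_of_forall_even_rootMultiplicity {p : R[X]} (hp : p.Splits)
    (h : ∀ t, Even (p.rootMultiplicity t)) : Even p.natDegree := by
  classical
  rw [hp.natDegree_eq_card_roots, ← Multiset.toFinset_sum_count_eq]
  refine Finset.sum_induction _ Even (fun _ _ => Even.add) Even.zero fun t _ => ?_
  rw [count_roots]
  exact h t

end Polynomial

namespace Matrix

variable {K m n : Type*} [Field K]

section Minors

variable [Fintype n] {r : ℕ}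

theorem exists_row_basis [Finite m] {A : Matrix m n K} (hr : A.rank = r) :
    ∃ f : Fin r → m, LinearIndependent K (A.submatrix f id).row ∧
      Submodule.span K (Set.range (A.submatrix f id).row) = Submodule.span K (Set.range A.row) := by
  obtain ⟨κ, a, ha, hspan, hli⟩ := exists_linearIndependent' K A.row
  have : Finite κ := Finite.of_injective a ha
  have : Fintype κ := Fintype.ofFinite κ
  have hcard : Fintype.card κ = r := by
    rw [← hr, A.rank_eq_finrank_span_row, ← hspan, finrank_span_eq_card hli]
  let e : κ ≃ Fin r := Fintype.equivFinOfCardEq hcard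
  refine ⟨a ∘ e.symm, hli.comp e.symm e.symm.injective, ?_⟩
  rw [← hspan]
  exact congrArg _ (e.symm.surjective.range_comp (A.row ∘ a))

theorem exists_eq_mul_submatrix_row [Finite m] {A : Matrix m n K} (hr : A.rank = r) :
    ∃ (f : Fin r → m) (C : Matrix m (Fin r) K), A = C * A.submatrix f id := by
  obtain ⟨f, -, hspan⟩ := exists_row_basis hr
  have hrow (i : m) : A.row i ∈ Submodule.span K (Set.range (A.submatrix f id).row) :=
    hspan ▸ Submodule.subset_span ⟨i, rfl⟩
  choose C hC using fun i => (Submodule.mem_span_range_iff_exists_fun K).mp (hrow i)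
  refine ⟨f, Matrix.of C, ?_⟩
  ext i j
  simpa [mul_apply] using (congrFun (hC i) j).symm

theorem exists_det_submatrix_ne_zero [Fintype m] {A : Matrix m n K} (hr : A.rank = r) :
    ∃ (f : Fin r → m) (g : Fin r → n), (A.submatrix f g).det ≠ 0 := by
  obtain ⟨f, hf, -⟩ := exists_row_basis hr
  have hrank : (A.submatrix f id)ᵀ.rank = r := by
    rw [rank_transpose, hf.rank_matrix, Fintype.card_fin]
  obtain ⟨g, hg, -⟩ := exists_row_basis hrank
  have hunit : IsUnit (A.submatrix f g)ᵀ := linearIndependent_rows_iff_isUnit.mp hg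
  refine ⟨f, g, ?_⟩
  rw [← det_transpose]
  exact ((isUnit_iff_isUnit_det _).mp hunit).ne_zero

theorem det_submatrix_mul_det_submatrix_swap [Finite m] {A : Matrix m n K} (hr : A.rank = r)
    (f f' : Fin r → m) (g g' : Fin r → n) :
    (A.submatrix f g).det * (A.submatrix f' g').det =
      (A.submatrix f g').det * (A.submatrix f' g).det := by
  obtain ⟨h, C, hA⟩ := exists_eq_mul_submatrix_row hr
  have hminor (f : Fin r → m) (g : Fin r → n) :
      (A.submatrix f g).det = (C.submatrix f id).det * (A.submatrix h g).det := by
    conv_lhs => rw [hA]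
    rw [submatrix_mul _ _ f id g Function.bijective_id, det_mul]
    rfl
  rw [hminor f g, hminor f' g', hminor f g', hminor f' g]
  ring

theorem IsSymm.det_submatrix_self_mul_det_submatrix_self {A : Matrix n n K} (hA : A.IsSymm)
    (hr : A.rank = r) (f g : Fin r → n) :
    (A.submatrix f f).det * (A.submatrix g g).det = (A.submatrix f g).det ^ 2 := by
  have hgf : (A.submatrix g f).det = (A.submatrix f g).det := by
    rw [← det_transpose, transpose_submatrix, hA.eq]
  rw [det_submatrix_mul_det_submatrix_swap hr, hgf, sq]

theorem IsSymm.exists_det_submatrix_self_ne_zero {A : Matrix n n K} (hA : A.IsSymm)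
    (hr : A.rank = r) : ∃ f : Fin r → n, (A.submatrix f f).det ≠ 0 := by
  obtain ⟨f, g, hfg⟩ := exists_det_submatrix_ne_zero hr
  have hprod := hA.det_submatrix_self_mul_det_submatrix_self hr f g
  exact ⟨f, left_ne_zero_of_mul (hprod ▸ pow_ne_zero 2 hfg)⟩

end Minors

section Pencil

noncomputable def pencil (M₀ M₁ : Matrix m n K) : Matrix m n K[X] :=
  (X : K[X]) • M₁.map C + M₀.map C

theorem pencil_submatrix {ι κ : Type*} (M₀ M₁ : Matrix m n K) (f : ι → m) (g : κ → n) :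
    (pencil M₀ M₁).submatrix f g = pencil (M₀.submatrix f g) (M₁.submatrix f g) :=
  rfl

theorem eval_det_pencil [Fintype n] [DecidableEq n] (M₀ M₁ : Matrix n n K) (t : K) :
    (pencil M₀ M₁).det.eval t = (M₀ + t • M₁).det := by
  rw [← coe_evalRingHom, RingHom.map_det]
  congr 1
  ext i j
  simp only [pencil, RingHom.mapMatrix_apply, coe_evalRingHom, map_apply, add_apply, smul_apply,
    smul_eq_mul, eval_add, eval_mul, eval_C, eval_X]
  ring

variable [Fintype n] [Infinite K] {r : ℕ} {M₀ M₁ : Matrix n n K}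

theorem IsSymm.det_pencil_submatrix_self_mul (h₀ : M₀.IsSymm) (h₁ : M₁.IsSymm)
    (hrank : ∀ t : K, (M₀ + t • M₁).rank = r) (f g : Fin r → n) :
    ((pencil M₀ M₁).submatrix f f).det * ((pencil M₀ M₁).submatrix g g).det =
      ((pencil M₀ M₁).submatrix f g).det ^ 2 := by
  refine Polynomial.funext fun t => ?_
  simp only [eval_mul, eval_pow, pencil_submatrix, eval_det_pencil]
  exact (h₀.add (h₁.smul t)).det_submatrix_self_mul_det_submatrix_self (hrank t) f g

theorem IsSymm.even_of_rank_add_smul_eq [IsAlgClosed K] (h₀ : M₀.IsSymm) (h₁ : M₁.IsSymm)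
    (hM₁ : M₁.rank = r) (hrank : ∀ t : K, (M₀ + t • M₁).rank = r) : Even r := by
  obtain ⟨f₀, hf₀⟩ := h₁.exists_det_submatrix_self_ne_zero hM₁
  set p := (pencil (M₀.submatrix f₀ f₀) (M₁.submatrix f₀ f₀)).det
  have hcoeff : p.coeff r = (M₁.submatrix f₀ f₀).det := by
    have h := coeff_det_X_add_C_card (M₁.submatrix f₀ f₀) (M₀.submatrix f₀ f₀)
    rwa [Fintype.card_fin] at h
  have hdeg : p.natDegree = r := by
    refine le_antisymm ?_ (le_natDegree_of_ne_zero (hcoeff ▸ hf₀))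
    have h := natDegree_det_X_add_C_le (M₁.submatrix f₀ f₀) (M₀.submatrix f₀ f₀)
    rwa [Fintype.card_fin] at h
  have hp : p ≠ 0 := fun h => hf₀ (by rw [← hcoeff, h, coeff_zero])
  rw [← hdeg]
  refine Splits.even_natDegree_of_forall_even_rootMultiplicity (IsAlgClosed.splits p) fun t => ?_
  obtain ⟨f₁, hf₁⟩ := (h₀.add (h₁.smul t)).exists_det_submatrix_self_ne_zero (hrank t)
  refine even_rootMultiplicity_of_mul_eq_sq (h₀.det_pencil_submatrix_self_mul h₁ hrank f₀ f₁) hp ?_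
  rwa [pencil_submatrix, eval_det_pencil]

end Pencil

end Matrix

theorem constant_odd_rank_dim_le_one_general
    {m r : ℕ} (hodd : Odd r)
    (A : Submodule ℂ (Matrix (Fin m) (Fin m) ℂ))
    (hsym : ∀ M ∈ A, M.transpose = M)
    (hrank : ∀ M ∈ A, M ≠ 0 → M.rank = r) :
    Module.finrank ℂ A ≤ 1 := by
  by_contra! hdim
  obtain ⟨M₁, hM₁⟩ := (Module.finrank_pos_iff_exists_ne_zero (R := ℂ) (M := A)).mp (by omega)
  obtain ⟨M₀, hli⟩ := exists_linearIndependent_pair_of_one_lt_finrank hdim hM₁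
  have hne (t : ℂ) : (M₀ : Matrix (Fin m) (Fin m) ℂ) + t • M₁ ≠ 0 := fun h =>
    one_ne_zero (LinearIndependent.pair_iff.mp hli t 1 (Subtype.ext (by simpa [add_comm] using h))).2
  refine Nat.not_even_iff_odd.mpr hodd (Matrix.IsSymm.even_of_rank_add_smul_eq (hsym _ M₀.2)
    (hsym _ M₁.2) (hrank _ M₁.2 (by simpa using hM₁)) fun t => ?_)
  exact hrank _ (A.add_mem M₀.2 (A.smul_mem t M₁.2)) (hne t)

/-- A linear space of symmetric `m × m` complex matrices of constant odd rank `r`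
(every nonzero element has rank exactly `r`) has dimension at most `1`. -/
theorem constant_odd_rank_dim_le_one
    {m r : ℕ} (hodd : Odd r) (hrpos : 0 < r) (hrm : r ≤ m)
    (A : Submodule ℂ (Matrix (Fin m) (Fin m) ℂ))
    (hsym : ∀ M ∈ A, M.transpose = M)
    (hrank : ∀ M ∈ A, M ≠ 0 → M.rank = r) :
    Module.finrank ℂ A ≤ 1 :=
  constant_odd_rank_dim_le_one_general hodd A hsym hrank
end

section
/- Let $r \le m$ be positive integers with $r$ even. Then there exists a linear subspace $A \subseteq S^2(\mathbb{C}^m)$ of dimension $m - r + 1$ such that every nonzero element of $A$ has rank exactly $r$. -/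
open Matrix

noncomputable section CERaux

namespace CER

/-- Extend a finite coefficient vector to `ℕ`. -/
def gfun (s : ℕ) (a : Fin (s + 1) → ℂ) : ℕ → ℂ :=
  fun t => if h : t < s + 1 then a ⟨t, h⟩ else 0

lemma gfun_add (s : ℕ) (a b : Fin (s + 1) → ℂ) (t : ℕ) :
    gfun s (a + b) t = gfun s a t + gfun s b t := by
  unfold gfun; split <;> simp

lemma gfun_smul (s : ℕ) (c : ℂ) (a : Fin (s + 1) → ℂ) (t : ℕ) :
    gfun s (c • a) t = c * gfun s a t := by
  unfold gfun; split <;> simp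

/-- The band (Toeplitz) matrix with rows given by shifts of `a`. -/
def Bmat (k n s : ℕ) (a : Fin (s + 1) → ℂ) : Matrix (Fin k) (Fin n) ℂ :=
  fun i j => if (i : ℕ) ≤ (j : ℕ) then gfun s a ((j : ℕ) - (i : ℕ)) else 0

/-- The symmetric doubling `[[0, B],[Bᵀ, 0]]`. -/
def Mmat (k n s : ℕ) (a : Fin (s + 1) → ℂ) :
    Matrix (Fin k ⊕ Fin n) (Fin k ⊕ Fin n) ℂ :=
  fromBlocks 0 (Bmat k n s a) (Bmat k n s a)ᵀ 0

lemma Bmat_add (k n s : ℕ) (a b : Fin (s + 1) → ℂ) :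
    Bmat k n s (a + b) = Bmat k n s a + Bmat k n s b := by
  ext i j
  simp only [Bmat, Matrix.add_apply, gfun_add]
  split <;> simp

lemma Bmat_smul (k n s : ℕ) (c : ℂ) (a : Fin (s + 1) → ℂ) :
    Bmat k n s (c • a) = c • Bmat k n s a := by
  ext i j
  simp only [Bmat, Matrix.smul_apply, gfun_smul, smul_eq_mul]
  split <;> simp

/-- `Mmat` as a linear map. -/
def Lmap (k n s : ℕ) :
    (Fin (s + 1) → ℂ) →ₗ[ℂ] Matrix (Fin k ⊕ Fin n) (Fin k ⊕ Fin n) ℂ where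
  toFun := Mmat k n s
  map_add' a b := by
    simp only [Mmat, Bmat_add, transpose_add, fromBlocks_add, add_zero]
  map_smul' c a := by
    simp only [Mmat, Bmat_smul, transpose_smul, RingHom.id_apply]
    rw [fromBlocks_smul]; simp

lemma Mmat_transpose (k n s : ℕ) (a : Fin (s + 1) → ℂ) :
    (Mmat k n s a)ᵀ = Mmat k n s a := by
  simp [Mmat, fromBlocks_transpose]

lemma Lmap_injective (k n s : ℕ) (hk : 0 < k) (hn : s < n) :
    Function.Injective (Lmap k n s) := by
  intro a b hab
  have h : ∀ t : Fin (s + 1), Bmat k n s a ⟨0, hk⟩ ⟨t, lt_of_le_of_lt (Nat.le_of_lt_succ t.2) hn⟩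
      = Bmat k n s b ⟨0, hk⟩ ⟨t, lt_of_le_of_lt (Nat.le_of_lt_succ t.2) hn⟩ := by
    intro t
    have h2 : Mmat k n s a (Sum.inl ⟨0, hk⟩)
        (Sum.inr ⟨t, lt_of_le_of_lt (Nat.le_of_lt_succ t.2) hn⟩)
        = Mmat k n s b (Sum.inl ⟨0, hk⟩)
        (Sum.inr ⟨t, lt_of_le_of_lt (Nat.le_of_lt_succ t.2) hn⟩) := by
      rw [show Mmat k n s a = Mmat k n s b from hab]
    simpa [Mmat, fromBlocks] using h2
  funext t
  have := h t
  simpa [Bmat, gfun, t.2] using this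

/-- `1.submatrix f id * M = M.submatrix f id` for an arbitrary `f`. -/
lemma one_submatrix_mul {α n' : Type*} [Fintype α] [DecidableEq α] {β : Type*} [Fintype β]
    (f : β → α) (M : Matrix α n' ℂ) :
    (1 : Matrix α α ℂ).submatrix f id * M = M.submatrix f id := by
  ext i j
  simp [Matrix.mul_apply, Matrix.one_apply]

lemma mul_submatrix_one' {α n' : Type*} [Fintype α] [DecidableEq α] {β : Type*} [Fintype β]
    (g : β → α) (M : Matrix n' α ℂ) :
    M * (1 : Matrix α α ℂ).submatrix id g = M.submatrix id g := by
  ext i j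
  simp [Matrix.mul_apply, Matrix.one_apply]

lemma rank_submatrix_le' {α : Type*} [Fintype α] [DecidableEq α] {β : Type*} [Fintype β]
    [DecidableEq β] (f g : β → α) (M : Matrix α α ℂ) :
    (M.submatrix f g).rank ≤ M.rank := by
  have h : M.submatrix f g =
      (1 : Matrix α α ℂ).submatrix f id * M * (1 : Matrix α α ℂ).submatrix id g := by
    rw [one_submatrix_mul, mul_submatrix_one']
    rfl
  rw [h]
  exact le_trans (Matrix.rank_mul_le_left _ _)
    (le_trans (Matrix.rank_mul_le_right _ _) le_rfl)

/-- Rank of `Mmat` is exactly `k + k` when `a ≠ 0`. -/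
lemma Mmat_rank (k n s : ℕ) (hkn : n = k + s) (a : Fin (s + 1) → ℂ) (ha : a ≠ 0) :
    (Mmat k n s a).rank = k + k := by
  -- upper bound : factor M = U * V
  have hub : (Mmat k n s a).rank ≤ k + k := by
    have hfac : Mmat k n s a =
        (fromBlocks (1 : Matrix (Fin k) (Fin k) ℂ) 0 0 (Bmat k n s a)ᵀ :
          Matrix (Fin k ⊕ Fin n) (Fin k ⊕ Fin k) ℂ) *
        (fromBlocks 0 (Bmat k n s a) (1 : Matrix (Fin k) (Fin k) ℂ) 0 :
          Matrix (Fin k ⊕ Fin k) (Fin k ⊕ Fin n) ℂ) := by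
      rw [fromBlocks_multiply]
      simp [Mmat]
    calc (Mmat k n s a).rank ≤
        (fromBlocks 0 (Bmat k n s a) (1 : Matrix (Fin k) (Fin k) ℂ) 0 :
          Matrix (Fin k ⊕ Fin k) (Fin k ⊕ Fin n) ℂ).rank := by
          rw [hfac]; exact Matrix.rank_mul_le_right _ _
      _ ≤ Fintype.card (Fin k ⊕ Fin k) := Matrix.rank_le_card_height _
      _ = k + k := by simp
  -- lower bound
  -- d is the least index with nonzero coefficient
  have hex : ∃ t, gfun s a t ≠ 0 := by
    by_contra h
    push_neg at h
    apply ha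
    funext t
    have := h (t : ℕ)
    simpa [gfun, t.2] using this
  classical
  set d := Nat.find hex with hd
  have hdne : gfun s a d ≠ 0 := Nat.find_spec hex
  have hdmin : ∀ t < d, gfun s a t = 0 := by
    intro t ht
    by_contra h
    exact absurd (Nat.find_le h) (not_le.mpr ht)
  have hds : d ≤ s := by
    by_contra h
    push_neg at h
    exact hdne (by simp [gfun]; omega)
  -- the selection maps
  have hρ : ∀ i : Fin k, d + (i : ℕ) < n := by
    intro i; omega
  set ρ : Fin k → Fin n := fun i => ⟨d + i, hρ i⟩ with hρdef
  set f : Fin k ⊕ Fin k → Fin k ⊕ Fin n := Sum.map id ρ with hf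
  set g : Fin k ⊕ Fin k → Fin k ⊕ Fin n := Sum.elim (fun j => Sum.inr (ρ j)) Sum.inl with hg
  set C : Matrix (Fin k) (Fin k) ℂ := fun i j => Bmat k n s a i (ρ j) with hC
  set D : Matrix (Fin k) (Fin k) ℂ := fun i j => Bmat k n s a j (ρ i) with hD
  have hS : (Mmat k n s a).submatrix f g = fromBlocks C 0 0 D := by
    ext i j
    rcases i with i | i <;> rcases j with j | j <;>
      simp [Mmat, fromBlocks, submatrix, hf, hg, hC, hD, Matrix.transpose_apply]
  have hCut : C.BlockTriangular id := by
    intro i j hij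
    simp only [hC, Bmat, hρdef]
    split
    · exact hdmin _ (by simp at hij ⊢; omega)
    · rfl
  have hDlt : D.BlockTriangular OrderDual.toDual := by
    intro i j hij
    simp only [hD, Bmat, hρdef]
    split
    · exact hdmin _ (by simp at hij ⊢; omega)
    · rfl
  have hCdiag : ∀ i : Fin k, C i i = gfun s a d := by
    intro i
    simp [hC, Bmat, hρdef]
  have hDdiag : ∀ i : Fin k, D i i = gfun s a d := by
    intro i
    simp [hD, Bmat, hρdef]
  have hdetC : C.det = (gfun s a d) ^ k := by
    rw [Matrix.det_of_upperTriangular hCut]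
    simp [hCdiag]
  have hdetD : D.det = (gfun s a d) ^ k := by
    rw [Matrix.det_of_lowerTriangular D hDlt]
    simp [hDdiag]
  have hdetS : ((Mmat k n s a).submatrix f g).det ≠ 0 := by
    rw [hS, Matrix.det_fromBlocks_zero₂₁, hdetC, hdetD]
    exact mul_ne_zero (pow_ne_zero _ hdne) (pow_ne_zero _ hdne)
  have hunit : IsUnit ((Mmat k n s a).submatrix f g) := by
    rw [Matrix.isUnit_iff_isUnit_det]
    exact isUnit_iff_ne_zero.mpr hdetS
  have hlb : k + k ≤ (Mmat k n s a).rank := by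
    have h1 : ((Mmat k n s a).submatrix f g).rank = Fintype.card (Fin k ⊕ Fin k) :=
      Matrix.rank_of_isUnit _ hunit
    have h2 := rank_submatrix_le' f g (Mmat k n s a)
    rw [h1] at h2
    simpa using h2
  omega

end CER

end CERaux

/-- For `r ≤ m` with `r` even and positive, there exists a linear space of symmetric `m × m`
complex matrices of dimension `m - r + 1` in which every nonzero element has rank exactly `r`. -/
theorem constant_even_rank_exists
    {m r : ℕ} (heven : Even r) (hrpos : 0 < r) (hrm : r ≤ m) :
    ∃ A : Submodule ℂ (Matrix (Fin m) (Fin m) ℂ),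
      (∀ M ∈ A, M.transpose = M) ∧ (∀ M ∈ A, M ≠ 0 → M.rank = r) ∧
      Module.finrank ℂ A = m - r + 1 := by
  classical
  obtain ⟨k, hk⟩ := heven
  have hkpos : 0 < k := by omega
  set s : ℕ := m - r with hs
  set n : ℕ := m - k with hn
  have hkn : n = k + s := by omega
  have hsn : s < n := by omega
  have hmn : k + n = m := by omega
  let e : Fin k ⊕ Fin n ≃ Fin m := finSumFinEquiv.trans (finCongr hmn)
  let L : (Fin (s + 1) → ℂ) →ₗ[ℂ] Matrix (Fin m) (Fin m) ℂ :=
    (Matrix.reindexLinearEquiv ℂ ℂ e e).toLinearMap ∘ₗ CER.Lmap k n s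
  have hLinj : Function.Injective L := by
    simp only [L, LinearMap.coe_comp, LinearEquiv.coe_coe]
    exact (Matrix.reindexLinearEquiv ℂ ℂ e e).injective.comp
      (CER.Lmap_injective k n s hkpos hsn)
  refine ⟨LinearMap.range L, ?_, ?_, ?_⟩
  · rintro M ⟨a, rfl⟩
    show (Matrix.reindex e e (CER.Mmat k n s a))ᵀ = _
    rw [Matrix.transpose_reindex, CER.Mmat_transpose]
    rfl
  · rintro M ⟨a, rfl⟩ hM
    have ha : a ≠ 0 := by
      rintro rfl
      exact hM (map_zero L)
    show (Matrix.reindex e e (CER.Mmat k n s a)).rank = r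
    rw [Matrix.rank_reindex, CER.Mmat_rank k n s hkn a ha]
    omega
  · rw [LinearMap.finrank_range_of_inj hLinj, Module.finrank_fin_fun]
end

section
/- Let $Y, Z \subseteq \mathbb{P}(V)$ be projective varieties over $\mathbb{C}$, let $y \in Y$ and $z \in Z$ be smooth points with $y \ne z$, and let $x$ be a point on the line joining $y$ and $z$. Then the affine tangent space of the join $S(Y,Z)$ at $x$ (when $x$ is a smooth point of $S(Y,Z)$) contains $\hat{T}_y Y + \hat{T}_z Z$, the sum of the affine (cone) tangent spaces of $Y$ at $y$ and $Z$ at $z$. -/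
/-!
The affine map `p ↦ s • p + t • z` sends the cone `Y` into the join `Y + Z` and `y` to
`x = s • y + t • z`; its derivative `s • id` therefore carries `T_y Y` into `T_x (Y + Z)`,
and as `s ≠ 0` the span of `T_x (Y + Z)` contains `T_y Y` itself. Exchanging the roles of `Y`
and `Z` gives the other summand.
-/

open Set Submodule
open scoped Pointwise

section TangentConeJoin

variable {𝕜 E : Type*} [NontriviallyNormedField 𝕜] [NormedAddCommGroup E] [NormedSpace 𝕜 E]
  {Y Z : Set E} {y u : E} {s : 𝕜}

theorem smul_mem_tangentConeAt_add {v : E} (hY : s • Y ⊆ Y) (hu : u ∈ Z)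
    (hv : v ∈ tangentConeAt 𝕜 Y y) : s • v ∈ tangentConeAt 𝕜 (Y + Z) (s • y + u) := by
  have hf : HasFDerivWithinAt (fun p ↦ s • p + u) (s • ContinuousLinearMap.id 𝕜 E) Y y :=
    (((hasFDerivAt_id y).const_smul s).add_const u).hasFDerivWithinAt
  have himage : (fun p ↦ s • p + u) '' Y ⊆ Y + Z := by
    rintro _ ⟨p, hp, rfl⟩
    exact add_mem_add (hY (smul_mem_smul_set hp)) hu
  exact tangentConeAt_mono himage (hf.mapsTo_tangent_cone hv)

theorem span_tangentConeAt_le_span_tangentConeAt_add (hs : s ≠ 0) (hY : s • Y ⊆ Y)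
    (hu : u ∈ Z) :
    span 𝕜 (tangentConeAt 𝕜 Y y) ≤ span 𝕜 (tangentConeAt 𝕜 (Y + Z) (s • y + u)) := by
  refine span_le.2 fun v hv ↦ ?_
  rw [← inv_smul_smul₀ hs v]
  exact smul_mem _ _ (subset_span (smul_mem_tangentConeAt_add hY hu hv))

end TangentConeJoin

theorem terracini_containment_general {V : Type*} [NormedAddCommGroup V] [NormedSpace ℂ V]
    (Y Z : Set V)
    (hYcone : ∀ c : ℂ, ∀ y ∈ Y, c • y ∈ Y)
    (hZcone : ∀ c : ℂ, ∀ z ∈ Z, c • z ∈ Z)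
    (y z : V) (hy : y ∈ Y) (hz : z ∈ Z)
    (s t : ℂ) (hs : s ≠ 0) (ht : t ≠ 0) :
    Submodule.span ℂ (tangentConeAt ℂ Y y) ⊔ Submodule.span ℂ (tangentConeAt ℂ Z z) ≤
      Submodule.span ℂ
        (tangentConeAt ℂ {x : V | ∃ a ∈ Y, ∃ b ∈ Z, x = a + b} (s • y + t • z)) := by
  have hjoin : {x : V | ∃ a ∈ Y, ∃ b ∈ Z, x = a + b} = Y + Z := by
    ext x
    simp only [mem_ofPred_eq, mem_add, eq_comm]
  have hYs : s • Y ⊆ Y := smul_set_subset_iff.2 (hYcone s)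
  have hZt : t • Z ⊆ Z := smul_set_subset_iff.2 (hZcone t)
  rw [hjoin]
  refine sup_le (span_tangentConeAt_le_span_tangentConeAt_add hs hYs (hZcone t z hz)) ?_
  rw [add_comm Y Z, add_comm (s • y)]
  exact span_tangentConeAt_le_span_tangentConeAt_add ht hZt (hYcone s y hy)

/-- **Terracini's Lemma (containment direction), at the level of affine cones.**
Let `Y, Z ⊆ V` be the affine cones over projective varieties, let `y ∈ Y`, `z ∈ Z` be
(lifts of) points with `y ≠ z`, and let `x = s•y + t•z` (with `s, t ≠ 0`) be a point of the
cone over the line joining them, inside the cone `S = {a + b : a ∈ Y, b ∈ Z}` over the join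
`S(Y,Z)`.  Then the (Zariski/affine) tangent space of the join at `x` — here the span of the
tangent cone, which at a smooth point is the affine tangent space — contains
`T̂_y Y + T̂_z Z`. -/
theorem terracini_containment {V : Type*} [NormedAddCommGroup V] [NormedSpace ℂ V]
    (Y Z : Set V)
    (hYcone : ∀ c : ℂ, ∀ y ∈ Y, c • y ∈ Y)
    (hZcone : ∀ c : ℂ, ∀ z ∈ Z, c • z ∈ Z)
    (y z : V) (hy : y ∈ Y) (hz : z ∈ Z) (hyz : y ≠ z)
    (s t : ℂ) (hs : s ≠ 0) (ht : t ≠ 0) :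
    Submodule.span ℂ (tangentConeAt ℂ Y y) ⊔ Submodule.span ℂ (tangentConeAt ℂ Z z) ≤
      Submodule.span ℂ
        (tangentConeAt ℂ {x : V | ∃ a ∈ Y, ∃ b ∈ Z, x = a + b} (s • y + t • z)) :=
  terracini_containment_general Y Z hYcone hZcone y z hy hz s t hs ht
end

section
/- Let $A \subseteq S^2 T^*$ be a linear system of quadratic forms on a complex vector space $T$, and let $q \in A$ be a generic element (i.e. of maximal rank among elements of $A$). Then the singular locus of $q$ (the kernel of its associated bilinear form) is contained in the common zero locus of all quadrics in $A$: for every $v$ with $q(v,\cdot) \equiv 0$ and every $q' \in A$, one has $q'(v,v) = 0$. -/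
/-!
If `γ := q'(v,v) ≠ 0`, put `D := q' - γ⁻¹ q'(·,v) q'(v,·)`. Since `q(v,·) = q(·,v) = 0`, for every
`t ≠ 0` the form `q + t D` is the rank-one update of `q + t q'` that kills `v`, and because
`(q + t q')(v,v) = tγ ≠ 0` this update lowers the rank by one. On the other hand the rank is lower
semicontinuous along the line `q + t D`: it is at least `rank q` for all but finitely many `t`.
Hence `rank (q + t q') > rank q` for a suitable `t`, contradicting the maximality of `rank q`.
-/

open Module LinearMap

section

variable {K V W : Type*} [Field K] [AddCommGroup V] [Module K V] [AddCommGroup W] [Module K W]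

theorem Module.End.exists_ne_zero_injective_one_add_smul [Infinite K] [FiniteDimensional K V]
    (h : Module.End K V) : ∃ t : K, t ≠ 0 ∧ Function.Injective ⇑(1 + t • h) := by
  have hfin : {t : K | t = 0 ∨ h.HasEigenvalue (-t⁻¹)}.Finite := by
    refine ((h.finite_hasEigenvalue.image fun μ => -μ⁻¹).insert 0).subset ?_
    rintro t (rfl | ht)
    · exact Set.mem_insert _ _
    · exact Set.mem_insert_of_mem _ ⟨-t⁻¹, ht, by simp⟩
  obtain ⟨t, ht⟩ := hfin.infinite_compl.nonempty
  simp only [Set.mem_compl_iff, Set.mem_ofPred_eq, not_or] at ht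
  refine ⟨t, ht.1, ?_⟩
  rw [← ker_eq_bot, eq_bot_iff]
  intro x hx
  have hx_eig : x ∈ h.eigenspace (-t⁻¹) := by
    rw [mem_eigenspace_iff]
    have hx' : x + t • h x = 0 := hx
    rw [neg_smul, eq_neg_iff_add_eq_zero, ← smul_right_inj ht.1, smul_add, smul_smul,
      mul_inv_cancel₀ ht.1, one_smul, smul_zero, add_comm]
    exact hx'
  rwa [not_ne_iff.mp (hasEigenvalue_iff.not.mp ht.2)] at hx_eig

theorem LinearMap.exists_ne_zero_finrank_range_le_add_smul [Infinite K] [FiniteDimensional K V]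
    (f g : V →ₗ[K] W) :
    ∃ t : K, t ≠ 0 ∧ finrank K (range f) ≤ finrank K (range (f + t • g)) := by
  obtain ⟨s, hs⟩ := f.rangeRestrict.exists_rightInverse_of_surjective f.range_rangeRestrict
  obtain ⟨π, hπ⟩ := (range f).subtype.exists_leftInverse_of_injective (range f).ker_subtype
  obtain ⟨t, ht, hinj⟩ := Module.End.exists_ne_zero_injective_one_add_smul (π ∘ₗ g ∘ₗ s)
  -- compressed to `range f` through the section `s` and the projection `π`, `f` becomes `1`
  have hcomp : π ∘ₗ (f + t • g) ∘ₗ s = 1 + t • (π ∘ₗ g ∘ₗ s) := by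
    rw [add_comp, comp_add, smul_comp, comp_smul]
    congr 1
    change π ∘ₗ (range f).subtype ∘ₗ f.rangeRestrict ∘ₗ s = 1
    rw [hs, comp_id, hπ]; rfl
  refine ⟨t, ht, ?_⟩
  rw [← hcomp] at hinj
  calc finrank K (range f) = finrank K (range ((f + t • g) ∘ₗ s)) :=
        (finrank_range_of_inj (Function.Injective.of_comp (f := π) hinj)).symm
    _ ≤ finrank K (range (f + t • g)) := Submodule.finrank_mono (range_comp_le_range _ _)

theorem LinearMap.finrank_range_sub_smulRight_lt [FiniteDimensional K V]
    (B : V →ₗ[K] V →ₗ[K] K) {v : V} (hv : B v v ≠ 0) :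
    finrank K (range (B - (B v v)⁻¹ • (B.flip v).smulRight (B v))) < finrank K (range B) := by
  set C := B - (B v v)⁻¹ • (B.flip v).smulRight (B v)
  refine Submodule.finrank_lt_finrank_of_lt (lt_of_le_of_ne ?_ fun h => ?_)
  · rintro - ⟨x, rfl⟩
    exact ⟨x - ((B v v)⁻¹ * B x v) • v, by simp [C, smul_smul, mul_comm]⟩
  · -- every form in `range C` vanishes at `v`, but `B v` does not
    obtain ⟨x, hx⟩ : B v ∈ range C := h ▸ mem_range_self B v
    have hxv := congr($hx v)
    simp only [C, sub_apply, smul_apply, smulRight_apply, flip_apply, smul_eq_mul] at hxv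
    rw [mul_left_comm, inv_mul_cancel₀ hv, mul_one, sub_self] at hxv
    exact hv hxv.symm

end

/-- **Bertini-type statement for linear systems of quadrics.**  Let `A` be a linear system of
quadratic (symmetric bilinear) forms on a complex vector space `T`, and let `q ∈ A` be a
generic element, i.e. of maximal rank among the elements of `A`.  Then the singular locus of
`q` is contained in the common zero locus of all quadrics of `A`: if `q(v,·) ≡ 0` then
`q'(v,v) = 0` for every `q' ∈ A`. -/
theorem bertini_for_quadrics
    {T : Type*} [AddCommGroup T] [Module ℂ T] [FiniteDimensional ℂ T]
    (A : Submodule ℂ (T →ₗ[ℂ] T →ₗ[ℂ] ℂ))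
    (hsymm : ∀ q ∈ A, ∀ x y : T, q x y = q y x)
    (q : T →ₗ[ℂ] T →ₗ[ℂ] ℂ) (hq : q ∈ A)
    (hmax : ∀ q' ∈ A,
      Module.finrank ℂ (LinearMap.range q') ≤ Module.finrank ℂ (LinearMap.range q))
    (v : T) (hv : q v = 0) :
    ∀ q' ∈ A, q' v v = 0 := by
  intro q' hq'
  by_contra hγ
  set D := q' - (q' v v)⁻¹ • (q'.flip v).smulRight (q' v)
  obtain ⟨t, ht, hrank_le⟩ := q.exists_ne_zero_finrank_range_le_add_smul D
  set B := q + t • q'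
  have hqv : ∀ x, q x v = 0 := fun x => (hsymm q hq x v).trans congr($hv x)
  have hBvv : B v v = t * q' v v := by simp [B, hv]
  have hupdate : B - (B v v)⁻¹ • (B.flip v).smulRight (B v) = q + t • D := by
    ext x y
    simp only [B, D, LinearMap.add_apply, LinearMap.sub_apply, LinearMap.smul_apply,
      smulRight_apply, flip_apply, hv, hqv, LinearMap.zero_apply, smul_eq_mul]
    field_simp
    ring
  have hrank_lt := B.finrank_range_sub_smulRight_lt (hBvv ▸ mul_ne_zero ht hγ)
  rw [hupdate] at hrank_lt
  have hB_le := hmax B (A.add_mem hq (A.smul_mem t hq'))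
  omega
end

section
/- Let $M$ be the $(m-r+1) \times (m-r+1)$ matrix with entries $M_{ij} = \binom{n}{(n-r+i) - j}$ for $0 \le j \le m-r$ and indices $i$ ranging so that the row index $n-r+1 \le n-r+i \le m+n-2r+1$ (with the convention $\binom{n}{s} = 0$ for $s < 0$ or $s > n$). Then $\det M = \prod_{j=0}^{m-r} j!\,$-times a nonzero constant; in particular $M$ is invertible. Equivalently, the matrix $\left(\binom{n}{i-j}\right)_{0\le j \le m-r,\; n-r+1 \le i \le m+n-2r+1}$ is invertible. -/
open Finset

private lemma westwick_aux_sum (n k j t : ℕ) (hj : j ≤ k) (hk : k < t) :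
    ∑ l ∈ Finset.range (k + 1), n.choose (t - l) * j.choose l = (n + j).choose t := by
  rw [add_comm n j, Nat.add_choose_eq,
    Finset.Nat.sum_antidiagonal_eq_sum_range_succ (fun a b => j.choose a * n.choose b) t,
    ← Finset.sum_subset (Finset.range_subset_range.2 (by omega : k + 1 ≤ t + 1))
      (fun a _ ha => by
        have : j < a := by simp only [Finset.mem_range, not_lt] at ha; omega
        simp [Nat.choose_eq_zero_of_lt this])]
  exact Finset.sum_congr rfl fun l _ => mul_comm _ _

/-- **Westwick's determinant evaluation.**  For `2 ≤ r ≤ m ≤ n`, the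
`(m-r+1) × (m-r+1)` matrix of binomial coefficients `M_{ij} = (n choose (n-r+1+i) - j)`,
with rows indexed by `n-r+1 ≤ n-r+1+i ≤ m+n-2r+1` and columns by `0 ≤ j ≤ m-r`
(and the convention that out-of-range binomial coefficients vanish), has determinant equal to
`∏_{j=0}^{m-r} j!` times a nonzero constant; in particular `M` is invertible. -/
theorem binomial_coefficient_matrix_invertible {r m n : ℕ}
    (h2 : 2 ≤ r) (hrm : r ≤ m) (hmn : m ≤ n) :
    (∃ c : ℚ, c ≠ 0 ∧
      (Matrix.of fun i j : Fin (m - r + 1) =>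
          (Nat.choose n (n - r + 1 + (i : ℕ) - (j : ℕ)) : ℚ)).det =
        c * ∏ j ∈ Finset.range (m - r + 1), (Nat.factorial j : ℚ)) ∧
    IsUnit (Matrix.of fun i j : Fin (m - r + 1) =>
      (Nat.choose n (n - r + 1 + (i : ℕ) - (j : ℕ)) : ℚ)) := by
  have hrn : r ≤ n := hrm.trans hmn
  set k := m - r with hkdef
  set s := n - r + 1 with hsdef
  have hks : k < s := by omega
  set M : Matrix (Fin (k + 1)) (Fin (k + 1)) ℚ :=
    Matrix.of (fun i j : Fin (k + 1) => (Nat.choose n (s + (i : ℕ) - (j : ℕ)) : ℚ)) with hM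
  set A : Matrix (Fin (k + 1)) (Fin (k + 1)) ℚ :=
    Matrix.of (fun l j : Fin (k + 1) => ((j : ℕ).choose l : ℚ)) with hA
  set N : Matrix (Fin (k + 1)) (Fin (k + 1)) ℚ :=
    Matrix.of (fun i j : Fin (k + 1) => ((n + (j : ℕ)).choose (s + i) : ℚ)) with hN
  have hMA : M * A = N := by
    ext i j
    rw [Matrix.mul_apply]
    simp only [hM, hA, hN, Matrix.of_apply]
    rw [Fin.sum_univ_eq_sum_range
      (fun l => (Nat.choose n (s + (i : ℕ) - l) : ℚ) * ((j : ℕ).choose l : ℚ))]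
    rw [← westwick_aux_sum n k j (s + i) (by omega) (by omega)]
    push_cast
    ring
  have hAdet : A.det = 1 := by
    have ht : A.BlockTriangular id := by
      intro i j hij
      simp only [hA, Matrix.of_apply]
      exact Nat.cast_eq_zero.2 (Nat.choose_eq_zero_of_lt hij)
    rw [Matrix.det_of_upperTriangular ht]
    simp [hA]
  have hdetMN : M.det = N.det := by
    have h := Matrix.det_mul M A
    rw [hMA, hAdet, mul_one] at h
    exact h.symm
  set V : Matrix (Fin (k + 1)) (Fin (k + 1)) ℚ :=
    Matrix.of (fun i j : Fin (k + 1) => ((r - 1 + (j : ℕ)).descFactorial i : ℚ)) with hV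
  have hNV : N = Matrix.of (fun i j : Fin (k + 1) =>
      ((n + (j : ℕ)).descFactorial s : ℚ) *
        Matrix.of (fun i j : Fin (k + 1) => (((s + (i : ℕ)).factorial : ℚ))⁻¹ * V i j) i j) := by
    ext i j
    have h2 : (r - 1 + (j : ℕ)).descFactorial i * (n + (j : ℕ)).descFactorial s
        = (n + (j : ℕ)).descFactorial (s + i) := by
      have h := Nat.descFactorial_mul_descFactorial
        (k := s) (m := s + (i : ℕ)) (n := n + (j : ℕ)) (Nat.le_add_right _ _)
      rwa [show n + (j : ℕ) - s = r - 1 + j by omega,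
        show s + (i : ℕ) - s = (i : ℕ) by omega] at h
    have h3 : (n + (j : ℕ)).choose (s + i) * (s + (i : ℕ)).factorial
        = (n + (j : ℕ)).descFactorial s * ((r - 1 + (j : ℕ)).descFactorial i) := by
      rw [mul_comm ((n + (j : ℕ)).choose (s + i)),
        ← Nat.descFactorial_eq_factorial_mul_choose, ← h2]
      ring
    have hfac : (((s + (i : ℕ)).factorial : ℚ)) ≠ 0 :=
      Nat.cast_ne_zero.2 (Nat.factorial_ne_zero _)
    simp only [hN, hV, Matrix.of_apply]
    rw [mul_left_comm, eq_inv_mul_iff_mul_eq₀ hfac, mul_comm]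
    exact_mod_cast h3
  have hdetN : N.det = (∏ j : Fin (k + 1), ((n + (j : ℕ)).descFactorial s : ℚ)) *
      ((∏ i : Fin (k + 1), (((s + (i : ℕ)).factorial : ℚ))⁻¹) * V.det) := by
    rw [hNV, Matrix.det_mul_row, Matrix.det_mul_column]
  have hVdet : V.det ≠ 0 := by
    have hVt : V.transpose = Matrix.of (fun i j : Fin (k + 1) =>
        (descPochhammer ℚ (j : ℕ)).eval (((r - 1 + (i : ℕ) : ℕ)) : ℚ)) := by
      ext i j
      simp only [hV, Matrix.transpose_apply, Matrix.of_apply]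
      rw [descPochhammer_eval_eq_descFactorial]
    have h := Matrix.det_eval_matrixOfPolynomials_eq_det_vandermonde
      (fun i : Fin (k + 1) => (((r - 1 + (i : ℕ) : ℕ)) : ℚ))
      (fun i => descPochhammer ℚ (i : ℕ))
      (fun i => descPochhammer_natDegree ℚ _) (fun i => monic_descPochhammer ℚ _)
    rw [← Matrix.det_transpose V, hVt, ← h]
    rw [Matrix.det_vandermonde_ne_zero_iff]
    intro a b hab
    simp only [Nat.cast_inj] at hab
    exact Fin.ext (by omega)
  have hdetM_ne : M.det ≠ 0 := by
    rw [hdetMN, hdetN]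
    refine mul_ne_zero (Finset.prod_ne_zero_iff.2 fun j _ => ?_)
      (mul_ne_zero (Finset.prod_ne_zero_iff.2 fun i _ => ?_) hVdet)
    · exact Nat.cast_ne_zero.2 (by rw [Ne, Nat.descFactorial_eq_zero_iff_lt]; omega)
    · exact inv_ne_zero (Nat.cast_ne_zero.2 (Nat.factorial_ne_zero _))
  have hprod : (∏ j ∈ Finset.range (k + 1), (Nat.factorial j : ℚ)) ≠ 0 :=
    Finset.prod_ne_zero_iff.2 fun j _ => Nat.cast_ne_zero.2 (Nat.factorial_ne_zero _)
  exact ⟨⟨M.det / _, div_ne_zero hdetM_ne hprod, (div_mul_cancel₀ _ hprod).symm⟩,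
    (Matrix.isUnit_iff_isUnit_det M).2 (isUnit_iff_ne_zero.2 hdetM_ne)⟩
end
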